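/- Let T be a bounded linear operator on H admitting an A-adjoint T♯. Then for every nonzero complex number α, (w_A(T))² ≤ ( max{1, |1 − α|}·‖T‖_A² + w_A(T²) ) / |α|. -/

import Mathlib

noncomputable section

open scoped ComplexInnerProductSpace

variable {H : Type*} [NormedAddCommGroup H] [InnerProductSpace ℂ H] [CompleteSpace H]

/-- The semi-inner product induced by a positive operator `A`:
`⟨x,y⟩_A = ⟨Ax,y⟩` (linear in the first argument, following the paper's convention). -/
def innerA (A : H →L[ℂ] H) (x y : H) : ℂ := ⟪y, A x⟫

/-- The seminorm induced by `A`: `‖x‖_A = ⟨Ax,x⟩^{1/2}`. -/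
def normA (A : H →L[ℂ] H) (x : H) : ℝ := Real.sqrt (innerA A x x).re

/-- The `A`-numerical radius `w_A(T) = sup { |⟨Tx,x⟩_A| : ‖x‖_A = 1 }`. -/
def wA (A T : H →L[ℂ] H) : ℝ :=
  sSup {r : ℝ | ∃ x : H, normA A x = 1 ∧ r = ‖innerA A (T x) x‖}

/-- The `A`-Crawford number `c_A(T) = inf { |⟨Tx,x⟩_A| : ‖x‖_A = 1 }`. -/
def cA (A T : H →L[ℂ] H) : ℝ :=
  sInf {r : ℝ | ∃ x : H, normA A x = 1 ∧ r = ‖innerA A (T x) x‖}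

/-- The `A`-operator seminorm `‖T‖_A = sup { ‖Tx‖_A : ‖x‖_A = 1 }`. -/
def opNormA (A T : H →L[ℂ] H) : ℝ :=
  sSup {r : ℝ | ∃ x : H, normA A x = 1 ∧ r = normA A (T x)}

/-- The `A`-Euclidean operator radius of the pair `(B, C)`. -/
def wAe (A B C : H →L[ℂ] H) : ℝ :=
  sSup {r : ℝ | ∃ x : H, normA A x = 1 ∧
    r = Real.sqrt (‖innerA A (B x) x‖^2 + ‖innerA A (C x) x‖^2)}

/-- The `A`-Euclidean operator seminorm of the pair `(B, C)`. -/
def normAe (A B C : H →L[ℂ] H) : ℝ :=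
  sSup {r : ℝ | ∃ x : H, normA A x = 1 ∧
    r = Real.sqrt ((normA A (B x))^2 + (normA A (C x))^2)}

/-- `Re_A(T) = (T + T♯)/2`, where `Ts` is an `A`-adjoint of `T`. -/
def ReA (T Ts : H →L[ℂ] H) : H →L[ℂ] H := (2 : ℂ)⁻¹ • (T + Ts)

/-- `Im_A(T) = (T - T♯)/(2i)`, where `Ts` is an `A`-adjoint of `T`. -/
def ImA (T Ts : H →L[ℂ] H) : H →L[ℂ] H := (2 * Complex.I)⁻¹ • (T - Ts)

/-
Factor `A = R† R` (possible as `A ≥ 0`), so that `⟨x, y⟩_A = ⟪R y, R x⟫` and `‖x‖_A = ‖R x‖`.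
Fix `x` with `‖R x‖ = 1` and put `c = ⟨Tx, x⟩_A`, `d = ⟨T²x, x⟩_A`. Since `⟨T♯x, x⟩_A = c` and
`⟨T²x, x⟩_A = ⟨Tx, T♯x⟩_A`, removing the components of `R T x` and `R T♯ x` along the unit
vector `R x` and applying Cauchy–Schwarz gives `|d - c²| ≤ ‖T‖_A² - |c|²`, using
`‖T♯‖_A ≤ ‖T‖_A`. Then `|α| |c|² ≤ |d - c²| + |d| + |1 - α| |c|²`, which is at most
`max {1, |1 - α|} ‖T‖_A² + w_A(T²)`.

The one analytic point is that `‖T‖_A` is finite. For the `A`-selfadjoint `S = T♯T`,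
Cauchy–Schwarz gives `‖S x‖_A² ≤ ‖x‖_A ‖S² x‖_A`; iterating along the powers `S^(2^n)` and
comparing with `‖S^(2^n) x‖_A ≤ ‖R‖ ‖S‖^(2^n) ‖x‖` yields `‖S x‖_A ≤ ‖S‖ ‖x‖_A`.
-/

open ContinuousLinearMap

lemma le_of_forall_pow_two_pow_le_mul {a b K : ℝ} (hb : 0 ≤ b)
    (h : ∀ n : ℕ, a ^ 2 ^ n ≤ K * b ^ 2 ^ n) : a ≤ b := by
  by_contra! hba
  rcases hb.eq_or_lt with rfl | hb
  · have h0 := h 0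
    simp only [pow_zero, pow_one, mul_zero] at h0
    linarith
  · have hr : 1 < a / b := (one_lt_div hb).2 hba
    obtain ⟨n, hn⟩ := pow_unbounded_of_one_lt K hr
    have hK : (a / b) ^ 2 ^ n ≤ K := by
      rw [div_pow, div_le_iff₀ (by positivity)]
      exact h n
    have hmono : (a / b) ^ n ≤ (a / b) ^ 2 ^ n :=
      pow_le_pow_right₀ hr.le Nat.lt_two_pow_self.le
    linarith

lemma pow_two_pow_mul_le_of_sq_le_mul_succ {a : ℕ → ℝ} {e : ℝ} (ha : ∀ n, 0 ≤ a n)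
    (he : 0 < e) (hstep : ∀ n, a n ^ 2 ≤ e * a (n + 1)) (n : ℕ) :
    a 0 ^ 2 ^ n * e ≤ a n * e ^ 2 ^ n := by
  induction n with
  | zero => simp
  | succ n ih =>
    refine le_of_mul_le_mul_left ?_ he
    calc e * (a 0 ^ 2 ^ (n + 1) * e) = (a 0 ^ 2 ^ n * e) ^ 2 := by ring
      _ ≤ (a n * e ^ 2 ^ n) ^ 2 := by gcongr; exact mul_nonneg (pow_nonneg (ha 0) _) he.le
      _ = a n ^ 2 * e ^ 2 ^ (n + 1) := by ring
      _ ≤ e * a (n + 1) * e ^ 2 ^ (n + 1) := by gcongr; exact hstep n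
      _ = e * (a (n + 1) * e ^ 2 ^ (n + 1)) := by ring

lemma le_mul_of_sq_le_mul_succ {a : ℕ → ℝ} {e r C : ℝ} (ha : ∀ n, 0 ≤ a n) (he : 0 ≤ e)
    (hr : 0 ≤ r) (hstep : ∀ n, a n ^ 2 ≤ e * a (n + 1)) (hC : ∀ n, a n ≤ C * r ^ 2 ^ n) :
    a 0 ≤ r * e := by
  rcases he.eq_or_lt with rfl | he
  · nlinarith [hstep 0, ha 0]
  · refine le_of_forall_pow_two_pow_le_mul (K := C / e) (mul_nonneg hr he.le) fun n => ?_
    rw [div_mul_eq_mul_div, le_div_iff₀ he]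
    calc a 0 ^ 2 ^ n * e ≤ a n * e ^ 2 ^ n :=
          pow_two_pow_mul_le_of_sq_le_mul_succ ha he hstep n
      _ ≤ C * r ^ 2 ^ n * e ^ 2 ^ n := by gcongr; exact hC n
      _ = C * (r * e) ^ 2 ^ n := by ring

section SemiInner

variable {E F : Type*} [NormedAddCommGroup E] [InnerProductSpace ℂ E]
  [NormedAddCommGroup F] [InnerProductSpace ℂ F] {R : E →L[ℂ] F}

lemma norm_sub_inner_smul_sq {e : F} (he : ‖e‖ = 1) (p : F) :
    ‖p - ⟪e, p⟫ • e‖ ^ 2 = ‖p‖ ^ 2 - ‖⟪e, p⟫‖ ^ 2 := by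
  rw [@norm_sub_sq ℂ, inner_smul_right, ← inner_conj_symm e p, RCLike.conj_mul, norm_smul, he,
    RCLike.norm_conj]
  norm_cast
  ring

lemma inner_sub_inner_smul {e : F} (he : ‖e‖ = 1) (p q : F) :
    ⟪q - ⟪e, q⟫ • e, p - ⟪e, p⟫ • e⟫ = ⟪q, p⟫ - ⟪q, e⟫ * ⟪e, p⟫ := by
  simp only [inner_sub_left, inner_sub_right, inner_smul_left, inner_smul_right,
    inner_conj_symm, inner_self_eq_norm_sq_to_K, he]
  push_cast
  ring

lemma norm_inner_sub_inner_mul_inner_le {e p q : F} (he : ‖e‖ = 1) :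
    ‖⟪q, p⟫ - ⟪q, e⟫ * ⟪e, p⟫‖ ≤ ((‖p‖ ^ 2 - ‖⟪e, p⟫‖ ^ 2) + (‖q‖ ^ 2 - ‖⟪e, q⟫‖ ^ 2)) / 2 := by
  rw [← inner_sub_inner_smul he, ← norm_sub_inner_smul_sq he, ← norm_sub_inner_smul_sq he]
  set u := p - ⟪e, p⟫ • e
  set v := q - ⟪e, q⟫ • e
  calc ‖⟪v, u⟫‖ ≤ ‖v‖ * ‖u‖ := norm_inner_le_norm v u
    _ ≤ (‖u‖ ^ 2 + ‖v‖ ^ 2) / 2 := by nlinarith [sq_nonneg (‖u‖ - ‖v‖)]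

lemma norm_mul_sq_inner_le {e p q : F} {N : ℝ} (he : ‖e‖ = 1) (hp : ‖p‖ ≤ N) (hq : ‖q‖ ≤ N)
    (hpq : ⟪q, e⟫ = ⟪e, p⟫) (α : ℂ) :
    ‖α‖ * ‖⟪e, p⟫‖ ^ 2 ≤ max 1 ‖1 - α‖ * N ^ 2 + ‖⟪q, p⟫‖ := by
  set c := ⟪e, p⟫
  set d := ⟪q, p⟫
  have hc : ‖c‖ ≤ N := by
    calc ‖c‖ ≤ ‖e‖ * ‖p‖ := norm_inner_le_norm e p
      _ ≤ N := by rw [he, one_mul]; exact hp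
  have hdc : ‖d - c ^ 2‖ ≤ N ^ 2 - ‖c‖ ^ 2 := by
    have hqe : ‖⟪e, q⟫‖ = ‖c‖ := by rw [← inner_conj_symm, hpq, RCLike.norm_conj]
    have h := norm_inner_sub_inner_mul_inner_le (p := p) (q := q) he
    rw [hpq, hqe, ← sq] at h
    have := pow_le_pow_left₀ (norm_nonneg p) hp 2
    have := pow_le_pow_left₀ (norm_nonneg q) hq 2
    linarith
  have htri : ‖α‖ * ‖c‖ ^ 2 ≤ ‖d - c ^ 2‖ + ‖d‖ + ‖1 - α‖ * ‖c‖ ^ 2 := by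
    calc ‖α‖ * ‖c‖ ^ 2 = ‖(c ^ 2 - d) + d - (1 - α) * c ^ 2‖ := by
          rw [← norm_pow, ← norm_mul]; ring_nf
      _ ≤ ‖c ^ 2 - d‖ + ‖d‖ + ‖(1 - α) * c ^ 2‖ :=
          (norm_sub_le _ _).trans (by gcongr; exact norm_add_le _ _)
      _ = ‖d - c ^ 2‖ + ‖d‖ + ‖1 - α‖ * ‖c‖ ^ 2 := by rw [norm_sub_rev, norm_mul, norm_pow]
  have hm1 : 1 ≤ max 1 ‖1 - α‖ := le_max_left _ _
  have hm2 : ‖1 - α‖ ≤ max 1 ‖1 - α‖ := le_max_right _ _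
  have hcN : ‖c‖ ^ 2 ≤ N ^ 2 := pow_le_pow_left₀ (norm_nonneg c) hc 2
  nlinarith [mul_nonneg (sub_nonneg.2 hm1) (sub_nonneg.2 hcN),
    mul_nonneg (sub_nonneg.2 hm2) (sq_nonneg ‖c‖)]

lemma inner_map_pow_apply_comm {S : E →L[ℂ] E} (hS : ∀ x y, ⟪R (S x), R y⟫ = ⟪R x, R (S y)⟫)
    (k : ℕ) (x y : E) : ⟪R ((S ^ k) x), R y⟫ = ⟪R x, R ((S ^ k) y)⟫ := by
  induction k generalizing x y with
  | zero => simp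
  | succ k ih =>
    calc ⟪R ((S ^ (k + 1)) x), R y⟫ = ⟪R ((S ^ k) (S x)), R y⟫ := by
          rw [pow_succ, mul_apply_eq_comp]
      _ = ⟪R x, R (S ((S ^ k) y))⟫ := by rw [ih, hS]
      _ = ⟪R x, R ((S ^ (k + 1)) y)⟫ := by rw [pow_succ', mul_apply_eq_comp]

lemma norm_map_apply_sq_le {S : E →L[ℂ] E} (hS : ∀ x y, ⟪R (S x), R y⟫ = ⟪R x, R (S y)⟫)
    (x : E) : ‖R (S x)‖ ^ 2 ≤ ‖R x‖ * ‖R (S (S x))‖ :=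
  calc ‖R (S x)‖ ^ 2 = RCLike.re ⟪R (S x), R (S x)⟫ := (inner_self_eq_norm_sq _).symm
    _ = RCLike.re ⟪R x, R (S (S x))⟫ := by rw [hS]
    _ ≤ ‖⟪R x, R (S (S x))⟫‖ := RCLike.re_le_norm _
    _ ≤ ‖R x‖ * ‖R (S (S x))‖ := norm_inner_le_norm _ _

lemma norm_map_apply_le_opNorm_mul {S : E →L[ℂ] E}
    (hS : ∀ x y, ⟪R (S x), R y⟫ = ⟪R x, R (S y)⟫) (x : E) : ‖R (S x)‖ ≤ ‖S‖ * ‖R x‖ := by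
  have hstep (n : ℕ) :
      ‖R ((S ^ 2 ^ n) x)‖ ^ 2 ≤ ‖R x‖ * ‖R ((S ^ 2 ^ (n + 1)) x)‖ := by
    rw [pow_succ 2 n, pow_mul, sq (S ^ 2 ^ n), mul_apply_eq_comp]
    exact norm_map_apply_sq_le (inner_map_pow_apply_comm hS _) x
  have hC (n : ℕ) : ‖R ((S ^ 2 ^ n) x)‖ ≤ (‖R‖ * ‖x‖) * ‖S‖ ^ 2 ^ n :=
    calc ‖R ((S ^ 2 ^ n) x)‖ ≤ ‖R‖ * (‖S ^ 2 ^ n‖ * ‖x‖) :=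
          R.le_opNorm_of_le ((S ^ 2 ^ n).le_opNorm x)
      _ ≤ ‖R‖ * (‖S‖ ^ 2 ^ n * ‖x‖) := by gcongr; exact norm_pow_le' S (by positivity)
      _ = (‖R‖ * ‖x‖) * ‖S‖ ^ 2 ^ n := by ring
  simpa using le_mul_of_sq_le_mul_succ (fun n => norm_nonneg _) (norm_nonneg _) (norm_nonneg S)
    hstep hC

variable {T Ts : E →L[ℂ] E}

lemma inner_map_comp_apply_comm (hT : ∀ x y, ⟪R (Ts x), R y⟫ = ⟪R x, R (T y)⟫) (x y : E) :
    ⟪R ((Ts * T) x), R y⟫ = ⟪R x, R ((Ts * T) y)⟫ := by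
  rw [mul_apply_eq_comp, mul_apply_eq_comp, hT, ← inner_conj_symm (R x), hT, inner_conj_symm]

lemma norm_map_apply_le_sqrt_mul (hT : ∀ x y, ⟪R (Ts x), R y⟫ = ⟪R x, R (T y)⟫) (x : E) :
    ‖R (T x)‖ ≤ √‖Ts * T‖ * ‖R x‖ := by
  refine le_of_pow_le_pow_left₀ two_ne_zero (by positivity) ?_
  rw [mul_pow, Real.sq_sqrt (norm_nonneg _)]
  calc ‖R (T x)‖ ^ 2 = RCLike.re ⟪R ((Ts * T) x), R x⟫ := by
        rw [mul_apply_eq_comp, hT, inner_self_eq_norm_sq]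
    _ ≤ ‖R ((Ts * T) x)‖ * ‖R x‖ := (RCLike.re_le_norm _).trans (norm_inner_le_norm _ _)
    _ ≤ ‖Ts * T‖ * ‖R x‖ * ‖R x‖ := by
        gcongr; exact norm_map_apply_le_opNorm_mul (inner_map_comp_apply_comm hT) x
    _ = ‖Ts * T‖ * ‖R x‖ ^ 2 := by ring

lemma norm_map_adjoint_apply_le (hT : ∀ x y, ⟪R (Ts x), R y⟫ = ⟪R x, R (T y)⟫) {N : ℝ}
    (hN0 : 0 ≤ N) (hN : ∀ y, ‖R (T y)‖ ≤ N * ‖R y‖) (x : E) : ‖R (Ts x)‖ ≤ N * ‖R x‖ := by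
  have h : ‖R (Ts x)‖ ^ 2 ≤ ‖R x‖ * (N * ‖R (Ts x)‖) :=
    calc ‖R (Ts x)‖ ^ 2 = RCLike.re ⟪R x, R (T (Ts x))⟫ := by rw [← hT, inner_self_eq_norm_sq]
      _ ≤ ‖R x‖ * ‖R (T (Ts x))‖ := (RCLike.re_le_norm _).trans (norm_inner_le_norm _ _)
      _ ≤ ‖R x‖ * (N * ‖R (Ts x)‖) := by gcongr; exact hN _
  nlinarith [mul_nonneg hN0 (norm_nonneg (R x))]

lemma opNormA_nonneg (A T : E →L[ℂ] E) : 0 ≤ opNormA A T :=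
  Real.sSup_nonneg (by rintro _ ⟨x, -, rfl⟩; exact Real.sqrt_nonneg _)

lemma wA_nonneg (A T : E →L[ℂ] E) : 0 ≤ wA A T :=
  Real.sSup_nonneg (by rintro _ ⟨x, -, rfl⟩; exact norm_nonneg _)

lemma norm_innerA_le_wA {A S : E →L[ℂ] E} {C : ℝ}
    (hC : ∀ x, normA A x = 1 → ‖innerA A (S x) x‖ ≤ C) {x : E} (hx : normA A x = 1) :
    ‖innerA A (S x) x‖ ≤ wA A S :=
  le_csSup ⟨C, by rintro _ ⟨y, hy, rfl⟩; exact hC y hy⟩ ⟨x, hx, rfl⟩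

lemma sq_wA_le {A T : E →L[ℂ] E} {K : ℝ} (hK0 : 0 ≤ K)
    (hK : ∀ x, normA A x = 1 → ‖innerA A (T x) x‖ ^ 2 ≤ K) : wA A T ^ 2 ≤ K := by
  refine (Real.le_sqrt (wA_nonneg A T) hK0).1 (Real.sSup_le ?_ (Real.sqrt_nonneg K))
  rintro _ ⟨x, hx, rfl⟩
  exact Real.le_sqrt_of_sq_le (hK x hx)

end SemiInner

lemma normA_star_mul_self (R : H →L[ℂ] H) (x : H) : normA (star R * R) x = ‖R x‖ := by
  rw [normA, innerA, star_eq_adjoint, mul_apply_eq_comp, adjoint_inner_right,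
    ← RCLike.re_eq_complex_re, inner_self_eq_norm_sq, Real.sqrt_sq (norm_nonneg _)]

lemma innerA_star_mul_self (R : H →L[ℂ] H) (x y : H) : innerA (star R * R) x y = ⟪R y, R x⟫ := by
  rw [innerA, star_eq_adjoint, mul_apply_eq_comp, adjoint_inner_right]

lemma inner_map_apply_comm_of_comp_eq {R T Ts : H →L[ℂ] H}
    (hT : (star R * R).comp Ts = (adjoint T).comp (star R * R)) (x y : H) :
    ⟪R (Ts x), R y⟫ = ⟪R x, R (T y)⟫ := by
  have h := congrArg (fun B : H →L[ℂ] H => ⟪B x, y⟫) hT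
  simpa only [comp_apply, adjoint_inner_left, star_eq_adjoint, mul_apply_eq_comp,
    adjoint_inner_left] using h

lemma norm_map_apply_le_opNormA_mul {R T : H →L[ℂ] H} {C : ℝ}
    (hC : ∀ x, ‖R (T x)‖ ≤ C * ‖R x‖) (y : H) :
    ‖R (T y)‖ ≤ opNormA (star R * R) T * ‖R y‖ := by
  have hbdd : BddAbove {r : ℝ | ∃ x : H, normA (star R * R) x = 1 ∧
      r = normA (star R * R) (T x)} := by
    refine ⟨C, ?_⟩
    rintro _ ⟨x, hx, rfl⟩
    rw [normA_star_mul_self] at hx ⊢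
    simpa [hx] using hC x
  rcases (norm_nonneg (R y)).eq_or_lt with hy | hy
  · simpa [← hy] using hC y
  · have hunit : normA (star R * R) (((‖R y‖⁻¹ : ℝ) : ℂ) • y) = 1 := by
      rw [normA_star_mul_self, map_smul, norm_smul, Complex.norm_real, Real.norm_eq_abs,
        abs_inv, abs_norm, inv_mul_cancel₀ hy.ne']
    have h := le_csSup hbdd ⟨_, hunit, rfl⟩
    rw [normA_star_mul_self, map_smul, map_smul, norm_smul, Complex.norm_real, Real.norm_eq_abs,
      abs_inv, abs_norm, inv_mul_le_iff₀ hy] at h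
    exact h.trans_eq (mul_comm _ _)

lemma norm_inner_map_mul_self_apply_le_wA {R T : H →L[ℂ] H} {N : ℝ} (hN0 : 0 ≤ N)
    (hN : ∀ x, ‖R (T x)‖ ≤ N * ‖R x‖) {x : H} (hx : ‖R x‖ = 1) :
    ‖⟪R x, R (T (T x))⟫‖ ≤ wA (star R * R) (T * T) := by
  have hbound (y : H) (hy : ‖R y‖ = 1) : ‖⟪R y, R (T (T y))⟫‖ ≤ N ^ 2 :=
    calc ‖⟪R y, R (T (T y))⟫‖ ≤ ‖R y‖ * ‖R (T (T y))‖ := norm_inner_le_norm _ _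
      _ ≤ N * ‖R (T y)‖ := by rw [hy, one_mul]; exact hN _
      _ ≤ N * N := by gcongr; simpa [hy] using hN y
      _ = N ^ 2 := by ring
  simpa only [innerA_star_mul_self, normA_star_mul_self, mul_apply_eq_comp] using
    norm_innerA_le_wA (A := star R * R) (S := T * T) (C := N ^ 2)
      (by simpa only [innerA_star_mul_self, normA_star_mul_self, mul_apply_eq_comp] using hbound)
      (by rwa [normA_star_mul_self])

theorem stmt10_general (A : H →L[ℂ] H) (hA : A.IsPositive)
    (T Ts : H →L[ℂ] H)
    (hT : A.comp Ts = (ContinuousLinearMap.adjoint T).comp A)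
    (α : ℂ) (hα : α ≠ 0) :
    (wA A T)^2
      ≤ (max 1 ‖1 - α‖ * (opNormA A T)^2 + wA A (T * T))
          / ‖α‖ := by
  obtain ⟨R, rfl⟩ := CStarAlgebra.nonneg_iff_eq_star_mul_self.mp ((nonneg_iff_isPositive A).2 hA)
  have hRT := inner_map_apply_comm_of_comp_eq hT
  set N := opNormA (star R * R) T
  have hN0 : 0 ≤ N := opNormA_nonneg _ T
  have hTN : ∀ x, ‖R (T x)‖ ≤ N * ‖R x‖ :=
    norm_map_apply_le_opNormA_mul (norm_map_apply_le_sqrt_mul hRT)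
  have hTsN := norm_map_adjoint_apply_le hRT hN0 hTN
  refine sq_wA_le (div_nonneg (add_nonneg (by positivity) (wA_nonneg _ _)) (norm_nonneg α))
    fun x hx => ?_
  rw [normA_star_mul_self] at hx
  rw [innerA_star_mul_self, le_div_iff₀ (norm_pos_iff.2 hα), mul_comm]
  have hTx : ‖R (T x)‖ ≤ N := by simpa [hx] using hTN x
  have hTsx : ‖R (Ts x)‖ ≤ N := by simpa [hx] using hTsN x
  have key := norm_mul_sq_inner_le hx hTx hTsx (hRT x x) α
  rw [hRT] at key
  linarith [norm_inner_map_mul_self_apply_le_wA hN0 hTN hx]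

theorem stmt10 (A : H →L[ℂ] H) (hA : A.IsPositive) (hA0 : A ≠ 0)
    (T Ts : H →L[ℂ] H)
    (hT : A.comp Ts = (ContinuousLinearMap.adjoint T).comp A)
    (α : ℂ) (hα : α ≠ 0) :
    (wA A T)^2
      ≤ (max 1 ‖1 - α‖ * (opNormA A T)^2 + wA A (T * T))
          / ‖α‖ :=
  stmt10_general A hA T Ts hT α hα
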